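/- arXiv:2603.10406 — 3 statements merged into one kernel-verified Lean document; each statement's English description precedes it below -/
import Mathlib

section
/- Let n ≥ 4 be an integer. Then the matrix n·I − Q'_n is positive semidefinite and has rank n−1. -/
/-!
Every row of `Q'_n` sums to `n`, so `n • 1 - Q'_n` is the Laplacian `diag(W·1) - W` of the
symmetric nonnegative weight matrix `W = Q'_n`. The Laplacian quadratic form is
`½ ∑ᵢⱼ Wᵢⱼ (xᵢ - xⱼ)²`, hence it is positive semidefinite and a vector in its kernel is
constant along every edge of positive weight. The consecutive entries `Q'_n[k, k+1]` are all
positive, so the weighted graph contains the path `1 - 2 - ⋯ - n`: the kernel consists of the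
constant vectors and the rank is `n - 1`.
-/

open Matrix

/-- The ascending sorted list of eigenvalues (with multiplicity) of a real
symmetric (Hermitian) matrix; junk value `[]` otherwise. -/
noncomputable def eigsList {m : Type*} [Fintype m] [DecidableEq m]
    (M : Matrix m m ℝ) : List ℝ :=
  if h : M.IsHermitian then Multiset.sort (Finset.univ.val.map h.eigenvalues) (· ≤ ·)
  else []

/-- The `k`-th largest eigenvalue (1-indexed, counted with multiplicity). -/
noncomputable def kthLargest {m : Type*} [Fintype m] [DecidableEq m]
    (M : Matrix m m ℝ) (k : ℕ) : ℝ :=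
  (eigsList M).getD (Fintype.card m - k) 0

/-- The `k`-th smallest eigenvalue (1-indexed, counted with multiplicity). -/
noncomputable def kthSmallest {m : Type*} [Fintype m] [DecidableEq m]
    (M : Matrix m m ℝ) (k : ℕ) : ℝ :=
  (eigsList M).getD (k - 1) 0

/-- The Laplacian `𝔏(M) = diag(M·1) − M`. -/
noncomputable def Lap {n : ℕ} (M : Matrix (Fin n) (Fin n) ℝ) : Matrix (Fin n) (Fin n) ℝ :=
  Matrix.diagonal (fun i => ∑ j, M i j) - M

/-- The matrix `Q_n` (1-indexed description, realized on `Fin n`). -/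
noncomputable def Qmat (n : ℕ) : Matrix (Fin n) (Fin n) ℝ := fun i j =>
  let d := ((i.val : ℤ) - (j.val : ℤ)).natAbs
  if d = 0 then
    (if i.val = 0 ∨ i.val = n - 1 then ((n : ℝ) ^ 2 - n - 6) / 2
     else if i.val = 1 ∨ i.val = n - 2 then ((n : ℝ) ^ 2 - 3 * n - 2) / 2
     else ((n : ℝ) ^ 2 - 3 * n - 6) / 2)
  else if d = 1 then (n : ℝ) - 2
  else if d = 2 then 2
  else 0

/-- The matrix `Q'_n` (1-indexed description, realized on `Fin n`). -/
noncomputable def Qp (n : ℕ) : Matrix (Fin n) (Fin n) ℝ := fun i j =>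
  let a := i.val + 1
  let b := j.val + 1
  if (a = 1 ∧ b = 2) ∨ (a = 2 ∧ b = 1) then (n : ℝ) - 2
  else if (a = 1 ∧ b = 3) ∨ (a = 3 ∧ b = 1) then 2
  else if a = 2 ∧ b = 2 then 1
  else if (a = 2 ∧ b = 3) ∨ (a = 3 ∧ b = 2) then 1
  else if a = 3 ∧ b = 3 then (n : ℝ) - 4
  else if (3 ≤ a ∧ a ≤ n - 1 ∧ b = a + 1) ∨ (3 ≤ b ∧ b ≤ n - 1 ∧ a = b + 1) then 1
  else if a = b ∧ 4 ≤ a ∧ a ≤ n - 1 then (n : ℝ) - 2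
  else if a = n ∧ b = n then (n : ℝ) - 1
  else 0

section Laplacian

variable {n : ℕ} {W : Matrix (Fin n) (Fin n) ℝ}

theorem lap_mulVec_one : Lap W *ᵥ 1 = 0 := by
  ext i
  rw [Lap, sub_mulVec, Pi.sub_apply, mulVec_diagonal, mulVec, dotProduct]
  simp

theorem dotProduct_lap_mulVec (hW : W.IsSymm) (x : Fin n → ℝ) :
    x ⬝ᵥ (Lap W *ᵥ x) = (∑ i, ∑ j, W i j * (x i - x j) ^ 2) / 2 := by
  have hdiag :
      x ⬝ᵥ (diagonal (fun i => ∑ j, W i j) *ᵥ x) = ∑ i, ∑ j, W i j * x i ^ 2 := by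
    simp only [dotProduct, mulVec_diagonal, Finset.mul_sum, Finset.sum_mul]
    exact Finset.sum_congr rfl fun i _ => Finset.sum_congr rfl fun j _ => by ring
  have hoff : x ⬝ᵥ (W *ᵥ x) = ∑ i, ∑ j, W i j * x i * x j := by
    simp only [dotProduct, mulVec, Finset.mul_sum]
    exact Finset.sum_congr rfl fun i _ => Finset.sum_congr rfl fun j _ => by ring
  have hswap : ∑ i, ∑ j, W i j * x j ^ 2 = ∑ i, ∑ j, W i j * x i ^ 2 := by
    rw [Finset.sum_comm]
    simp_rw [hW.apply]
  have hexpand : ∑ i, ∑ j, W i j * (x i - x j) ^ 2 =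
      ∑ i, ∑ j, W i j * x i ^ 2 + ∑ i, ∑ j, W i j * x j ^ 2 -
        2 * ∑ i, ∑ j, W i j * x i * x j := by
    simp only [← Finset.sum_add_distrib, Finset.mul_sum, ← Finset.sum_sub_distrib]
    exact Finset.sum_congr rfl fun i _ => Finset.sum_congr rfl fun j _ => by ring
  rw [Lap, sub_mulVec, dotProduct_sub, hdiag, hoff, hexpand, hswap]
  ring

theorem isHermitian_lap (hW : W.IsSymm) : (Lap W).IsHermitian := by
  rw [isHermitian_iff_isSymm]
  exact (isSymm_diagonal _).sub hW

variable (hW : W.IsSymm) (hW₀ : ∀ i j, 0 ≤ W i j)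
include hW hW₀

theorem posSemidef_lap : (Lap W).PosSemidef := by
  refine .of_dotProduct_mulVec_nonneg (isHermitian_lap hW) fun x => ?_
  rw [star_trivial, dotProduct_lap_mulVec hW]
  exact div_nonneg (Finset.sum_nonneg fun i _ => Finset.sum_nonneg fun j _ =>
    mul_nonneg (hW₀ i j) (sq_nonneg _)) zero_le_two

theorem eq_of_lap_mulVec_eq_zero {x : Fin n → ℝ} (hx : Lap W *ᵥ x = 0) {i j : Fin n}
    (hij : W i j ≠ 0) : x i = x j := by
  have hterm : ∀ i j, 0 ≤ W i j * (x i - x j) ^ 2 := fun i j =>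
    mul_nonneg (hW₀ i j) (sq_nonneg _)
  have hsum : ∑ i, ∑ j, W i j * (x i - x j) ^ 2 = 0 := by
    have := dotProduct_lap_mulVec hW x
    rw [hx, dotProduct_zero] at this
    linarith
  rw [Finset.sum_eq_zero_iff_of_nonneg fun i _ => Finset.sum_nonneg fun j _ => hterm i j] at hsum
  have := (Finset.sum_eq_zero_iff_of_nonneg fun j _ => hterm i j).mp (hsum i (Finset.mem_univ i)) j
    (Finset.mem_univ j)
  simpa [hij, sub_eq_zero] using this

theorem ker_lap {G : SimpleGraph (Fin n)} (hG : G.Preconnected)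
    (hGW : ∀ i j, G.Adj i j → W i j ≠ 0) :
    LinearMap.ker (Lap W).mulVecLin = Submodule.span ℝ {1} := by
  apply le_antisymm
  · intro x hx
    have hconst : ∀ i j, G.Reachable i j → x i = x j := by
      rintro i j ⟨p⟩
      induction p with
      | nil => rfl
      | cons hadj _ ih => exact (eq_of_lap_mulVec_eq_zero hW hW₀ hx (hGW _ _ hadj)).trans ih
    rcases isEmpty_or_nonempty (Fin n) with _ | ⟨⟨i₀⟩⟩
    · simp [Subsingleton.elim x 0]
    · exact Submodule.mem_span_singleton.mpr
        ⟨x i₀, funext fun j => by simpa using hconst i₀ j (hG i₀ j)⟩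
  · rw [Submodule.span_le, Set.singleton_subset_iff, SetLike.mem_coe, LinearMap.mem_ker,
      mulVecLin_apply, lap_mulVec_one]

theorem rank_lap {G : SimpleGraph (Fin n)} (hG : G.Connected)
    (hGW : ∀ i j, G.Adj i j → W i j ≠ 0) : (Lap W).rank = n - 1 := by
  have hker : Module.finrank ℝ (LinearMap.ker (Lap W).mulVecLin) = 1 := by
    have : Nonempty (Fin n) := hG.nonempty
    rw [ker_lap hW hW₀ hG.preconnected hGW, finrank_span_singleton one_ne_zero]
  have := LinearMap.finrank_range_add_finrank_ker (Lap W).mulVecLin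
  rw [hker, Module.finrank_fin_fun] at this
  rw [Matrix.rank]
  omega

end Laplacian

theorem isSymm_qp (n : ℕ) : (Qp n).IsSymm :=
  IsSymm.ext fun i j => by
    simp only [Qp]
    repeat' refine if_congr (by omega) rfl ?_
    rfl

theorem qp_nonneg {n : ℕ} (hn : 4 ≤ n) (i j : Fin n) : 0 ≤ Qp n i j := by
  have : (4 : ℝ) ≤ n := by exact_mod_cast hn
  simp only [Qp]
  split_ifs <;> linarith

theorem qp_ne_zero_of_val_succ_eq {n : ℕ} (hn : 4 ≤ n) {i j : Fin n} (h : i.val + 1 = j.val) :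
    Qp n i j ≠ 0 := by
  have : (4 : ℝ) ≤ n := by exact_mod_cast hn
  simp only [Qp]
  split_ifs <;> first | linarith | omega

theorem qp_ne_zero_of_adj {n : ℕ} (hn : 4 ≤ n) {i j : Fin n}
    (hij : (SimpleGraph.pathGraph n).Adj i j) : Qp n i j ≠ 0 := by
  rcases SimpleGraph.pathGraph_adj.mp hij with h | h
  · exact qp_ne_zero_of_val_succ_eq hn h
  · rw [← (isSymm_qp n).apply]
    exact qp_ne_zero_of_val_succ_eq hn h

section QpRows

variable {n : ℕ} (hn : 4 ≤ n) {i : Fin n}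
include hn

theorem qp_row_of_val_eq_zero (hi : i.val = 0) :
    Qp n i = Pi.single ⟨1, by omega⟩ ((n : ℝ) - 2) + Pi.single ⟨2, by omega⟩ 2 := by
  funext j
  simp only [Qp, Pi.add_apply, Pi.single_apply, Fin.ext_iff]
  split_ifs <;> first | ring1 | omega

theorem qp_row_of_val_eq_one (hi : i.val = 1) :
    Qp n i =
      Pi.single ⟨0, by omega⟩ ((n : ℝ) - 2) + Pi.single i 1 + Pi.single ⟨2, by omega⟩ 1 := by
  funext j
  simp only [Qp, Pi.add_apply, Pi.single_apply, Fin.ext_iff]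
  split_ifs <;> first | ring1 | omega

theorem qp_row_of_val_eq_two (hi : i.val = 2) :
    Qp n i = Pi.single ⟨0, by omega⟩ 2 + Pi.single ⟨1, by omega⟩ 1 +
      Pi.single i ((n : ℝ) - 4) + Pi.single ⟨3, by omega⟩ 1 := by
  funext j
  simp only [Qp, Pi.add_apply, Pi.single_apply, Fin.ext_iff]
  split_ifs <;> first | ring1 | omega

theorem qp_row_of_three_le_val (h3 : 3 ≤ i.val) (hi : i.val + 1 < n) :
    Qp n i =
      Pi.single ⟨i - 1, by omega⟩ 1 + Pi.single i ((n : ℝ) - 2) + Pi.single ⟨i + 1, hi⟩ 1 := by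
  funext j
  simp only [Qp, Pi.add_apply, Pi.single_apply, Fin.ext_iff]
  split_ifs <;> first | ring1 | omega

theorem qp_row_of_val_eq_last (hi : i.val + 1 = n) :
    Qp n i = Pi.single ⟨n - 2, by omega⟩ 1 + Pi.single i ((n : ℝ) - 1) := by
  funext j
  simp only [Qp, Pi.add_apply, Pi.single_apply, Fin.ext_iff]
  split_ifs <;> first | ring1 | omega

theorem sum_qp_row (i : Fin n) : ∑ j, Qp n i j = n := by
  rcases (by omega :
      i.val = 0 ∨ i.val = 1 ∨ i.val = 2 ∨ (3 ≤ i.val ∧ i.val + 1 < n) ∨ i.val + 1 = n)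
    with hi | hi | hi | ⟨h3, hi⟩ | hi <;>
  [rw [qp_row_of_val_eq_zero hn hi]; rw [qp_row_of_val_eq_one hn hi];
    rw [qp_row_of_val_eq_two hn hi]; rw [qp_row_of_three_le_val hn h3 hi];
    rw [qp_row_of_val_eq_last hn hi]] <;>
  simp only [Pi.add_apply, Finset.sum_add_distrib, Finset.sum_pi_single', Finset.mem_univ,
    if_true] <;>
  ring

end QpRows

theorem lap_qp {n : ℕ} (hn : 4 ≤ n) : Lap (Qp n) = (n : ℝ) • 1 - Qp n := by
  rw [Lap, smul_one_eq_diagonal]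
  congr
  exact funext (sum_qp_row hn)

theorem stmt5 (n : ℕ) (hn : 4 ≤ n) :
    (((n : ℝ) • (1 : Matrix (Fin n) (Fin n) ℝ) - Qp n).PosSemidef) ∧
      (((n : ℝ) • (1 : Matrix (Fin n) (Fin n) ℝ) - Qp n).rank = n - 1) := by
  have : Nonempty (Fin n) := ⟨⟨0, by omega⟩⟩
  have hpath : (SimpleGraph.pathGraph n).Connected := ⟨SimpleGraph.pathGraph_preconnected n⟩
  rw [← lap_qp hn]
  exact ⟨posSemidef_lap (isSymm_qp n) (qp_nonneg hn),
    rank_lap (isSymm_qp n) (qp_nonneg hn) hpath fun _ _ => qp_ne_zero_of_adj hn⟩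
end

section
/- Let n ≥ 9 be an integer, let μ = μ₂(𝔏(Q'_n)) be the second-smallest eigenvalue of 𝔏(Q'_n), and let v = (v₁,…,v_n)ᵀ be an eigenvector of 𝔏(Q'_n) with eigenvalue μ. Then there exists θ ∈ (0, π/3] satisfying 2cos θ = 2 − μ such that |v₂ − v₁| ≤ (2μ·|cos((2n−5)θ/2)|)/(n·cos(θ/2)) · |v_n|. -/
open Matrix

/-!
`Q'_n` is a nonnegative symmetric weight matrix whose support contains the path `1 - 2 - ⋯ - n`, so
`𝔏(Q'_n)` is positive semidefinite with kernel the constant vectors. Hence `μ₂ > 0`, and the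
Rayleigh quotient of `(-1, -1, 0, …, 0, 1, 1)`, which is orthogonal to the constants, gives
`μ₂ ≤ 1`; so `2 - μ = 2 cos θ` for some `θ ∈ (0, π/3]`.

Along the tail `3, …, n` the eigenvalue equation reads `v_{i-1} + v_{i+1} = 2 cos θ · v_i`, started
by `v_{n-1} = (1 - μ) v_n`; this Chebyshev recurrence gives `v_3 cos (θ/2) = v_n cos ((2n-5)θ/2)`.
The first two rows give `D (v_2 - v_1) = μ v_3` with `D = μ² - (2n-1)μ + 3n - 4 ≥ n/2`, and the
bound follows. (Indices here are 1-based; in Lean `v ⟨k, _⟩` is `v_{k+1}`.)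
-/

section Laplacian

open Finset

variable {n : ℕ}

lemma Lap_mulVec_apply (M : Matrix (Fin n) (Fin n) ℝ) (w : Fin n → ℝ) (i : Fin n) :
    (Lap M *ᵥ w) i = ∑ j, M i j * (w i - w j) := by
  rw [Lap, sub_mulVec, Pi.sub_apply, mulVec_diagonal]
  simp only [mulVec, dotProduct, sum_mul, mul_sub, sum_sub_distrib]

lemma Lap_mulVec_apply_eq_sum (M : Matrix (Fin n) (Fin n) ℝ) (w : Fin n → ℝ) (i : Fin n)
    (S : Finset (Fin n)) (hS : ∀ j ∉ S, j ≠ i → M i j = 0) :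
    (Lap M *ᵥ w) i = ∑ j ∈ S, M i j * (w i - w j) := by
  rw [Lap_mulVec_apply, ← sum_subset (subset_univ S)]
  intro j _ hj
  rcases eq_or_ne j i with rfl | hji
  · simp
  · simp [hS j hj hji]

lemma Lap_mulVec_one (M : Matrix (Fin n) (Fin n) ℝ) : Lap M *ᵥ 1 = 0 := by
  ext i
  simp [Lap_mulVec_apply]

variable {M : Matrix (Fin n) (Fin n) ℝ}

lemma isSymm_Lap (hM : M.IsSymm) : (Lap M).IsSymm := by
  simp only [IsSymm, Lap, transpose_sub, diagonal_transpose, hM.eq]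

lemma two_mul_dotProduct_Lap_mulVec (hM : M.IsSymm) (x : Fin n → ℝ) :
    2 * (x ⬝ᵥ (Lap M *ᵥ x)) = ∑ i, ∑ j, M i j * (x i - x j) ^ 2 := by
  have h₁ : x ⬝ᵥ (Lap M *ᵥ x) = ∑ i, ∑ j, M i j * x i * (x i - x j) := by
    simp only [dotProduct, Lap_mulVec_apply, mul_sum]
    exact sum_congr rfl fun i _ => sum_congr rfl fun j _ => by ring
  have h₂ : x ⬝ᵥ (Lap M *ᵥ x) = ∑ i, ∑ j, M i j * x j * (x j - x i) := by
    rw [h₁, sum_comm]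
    simp only [hM.apply]
  rw [two_mul]
  nth_rw 2 [h₂]
  rw [h₁, ← sum_add_distrib]
  exact sum_congr rfl fun i _ => by rw [← sum_add_distrib]; exact sum_congr rfl fun j _ => by ring

lemma posSemidef_Lap (hM : M.IsSymm) (hM₀ : ∀ i j, 0 ≤ M i j) : (Lap M).PosSemidef := by
  refine .of_dotProduct_mulVec_nonneg (isHermitian_iff_isSymm.mpr (isSymm_Lap hM)) fun x => ?_
  have hx := two_mul_dotProduct_Lap_mulVec hM x
  have hsum : 0 ≤ ∑ i, ∑ j, M i j * (x i - x j) ^ 2 :=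
    sum_nonneg fun i _ => sum_nonneg fun j _ => mul_nonneg (hM₀ i j) (sq_nonneg _)
  rw [star_trivial]
  linarith

lemma eq_of_Lap_mulVec_eq_zero (hM : M.IsSymm) (hM₀ : ∀ i j, 0 ≤ M i j) {w : Fin n → ℝ}
    (hw : Lap M *ᵥ w = 0) {i j : Fin n} (hij : M i j ≠ 0) : w i = w j := by
  have hsum := two_mul_dotProduct_Lap_mulVec hM w
  rw [hw, dotProduct_zero, mul_zero, eq_comm, sum_eq_zero_iff_of_nonneg fun i _ =>
    sum_nonneg fun j _ => mul_nonneg (hM₀ i j) (sq_nonneg _)] at hsum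
  have := (sum_eq_zero_iff_of_nonneg fun j _ => mul_nonneg (hM₀ i j) (sq_nonneg _)).mp
    (hsum i (mem_univ _)) j (mem_univ _)
  simpa [hij, sub_eq_zero] using this

end Laplacian

namespace List.Pairwise

variable {α : Type*} [LinearOrder α] {l : List α}

lemma countP_lt_getElem_le (hl : l.Pairwise (· ≤ ·)) (j : ℕ) (hj : j < l.length) :
    l.countP (· < l[j]) ≤ j := by
  induction l generalizing j with
  | nil => simp at hj
  | cons x l ih =>
    obtain ⟨hx, hl⟩ := List.pairwise_cons.mp hl
    cases j with
    | zero =>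
      simp only [List.getElem_cons_zero, List.countP_eq_zero, decide_eq_true_eq, not_lt,
        List.mem_cons, forall_eq_or_imp, le_refl, true_and, nonpos_iff_eq_zero]
      exact hx
    | succ j =>
      rw [List.countP_cons, List.getElem_cons_succ]
      have := ih hl j (by simpa using hj)
      split_ifs <;> omega

lemma succ_le_countP_le_getElem (hl : l.Pairwise (· ≤ ·)) (j : ℕ) (hj : j < l.length) :
    j + 1 ≤ l.countP (· ≤ l[j]) := by
  induction l generalizing j with
  | nil => simp at hj
  | cons x l ih =>
    obtain ⟨hx, hl⟩ := List.pairwise_cons.mp hl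
    rw [List.countP_cons]
    cases j with
    | zero => simp
    | succ j =>
      have hj' : j < l.length := by simpa using hj
      rw [List.getElem_cons_succ, if_pos (by simpa using hx _ (List.getElem_mem hj'))]
      have := ih hl j hj'
      omega

end List.Pairwise

namespace Matrix.IsHermitian

open Finset

variable {m : Type*} [Fintype m] [DecidableEq m] {A : Matrix m m ℝ}

lemma eigsList_pairwise (hA : A.IsHermitian) : (eigsList A).Pairwise (· ≤ ·) := by
  rw [eigsList, dif_pos hA]
  exact Multiset.pairwise_sort _ _

lemma eigsList_length (hA : A.IsHermitian) : (eigsList A).length = Fintype.card m := by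
  rw [eigsList, dif_pos hA]
  simp

lemma card_filter_eigenvalues (hA : A.IsHermitian) (p : ℝ → Prop) [DecidablePred p] :
    #{i | p (hA.eigenvalues i)} = (eigsList A).countP (p ·) := by
  rw [eigsList, dif_pos hA, ← Multiset.coe_countP, Multiset.sort_eq, Multiset.countP_map]
  rfl

lemma card_eigenvalues_lt_kthSmallest_le (hA : A.IsHermitian) {k : ℕ} (hk₁ : 1 ≤ k)
    (hk : k ≤ Fintype.card m) : #{i | hA.eigenvalues i < kthSmallest A k} ≤ k - 1 := by
  have hlen : k - 1 < (eigsList A).length := by rw [hA.eigsList_length]; omega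
  rw [hA.card_filter_eigenvalues (· < kthSmallest A k), kthSmallest,
    List.getD_eq_getElem _ _ hlen]
  exact hA.eigsList_pairwise.countP_lt_getElem_le _ hlen

lemma le_card_eigenvalues_le_kthSmallest (hA : A.IsHermitian) {k : ℕ} (hk₁ : 1 ≤ k)
    (hk : k ≤ Fintype.card m) : k ≤ #{i | hA.eigenvalues i ≤ kthSmallest A k} := by
  have hlen : k - 1 < (eigsList A).length := by rw [hA.eigsList_length]; omega
  rw [hA.card_filter_eigenvalues (· ≤ kthSmallest A k), kthSmallest,
    List.getD_eq_getElem _ _ hlen]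
  have := hA.eigsList_pairwise.succ_le_countP_le_getElem _ hlen
  omega

lemma eigenvectorBasis_dotProduct (hA : A.IsHermitian) (i j : m) :
    ⇑(hA.eigenvectorBasis i) ⬝ᵥ ⇑(hA.eigenvectorBasis j) = if i = j then 1 else 0 := by
  have := orthonormal_iff_ite.mp hA.eigenvectorBasis.orthonormal j i
  rw [EuclideanSpace.inner_eq_star_dotProduct, star_trivial] at this
  simpa [eq_comm] using this

lemma exists_eigenvalues_eq_zero (hA : A.IsHermitian) {w : m → ℝ} (hw : w ≠ 0)
    (hAw : A *ᵥ w = 0) : ∃ i, hA.eigenvalues i = 0 := by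
  have hdet := hA.det_eq_prod_eigenvalues
  rw [(exists_mulVec_eq_zero_iff).mp ⟨w, hw, hAw⟩, eq_comm, prod_eq_zero_iff] at hdet
  obtain ⟨i, -, hi⟩ := hdet
  exact ⟨i, by exact_mod_cast hi⟩

lemma eq_of_eigenvalues_eq_zero (hA : A.IsHermitian) {u : m → ℝ}
    (hker : ∀ w, A *ᵥ w = 0 → ∃ c : ℝ, w = c • u) {i j : m} (hi : hA.eigenvalues i = 0)
    (hj : hA.eigenvalues j = 0) : i = j := by
  have hb (k : m) (hk : hA.eigenvalues k = 0) : ∃ c : ℝ, ⇑(hA.eigenvectorBasis k) = c • u :=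
    hker _ (by rw [hA.mulVec_eigenvectorBasis, hk, zero_smul])
  obtain ⟨c, hc⟩ := hb i hi
  obtain ⟨d, hd⟩ := hb j hj
  by_contra hij
  have hii := hA.eigenvectorBasis_dotProduct i i
  have hjj := hA.eigenvectorBasis_dotProduct j j
  have hij' := hA.eigenvectorBasis_dotProduct i j
  simp only [hc, hd, smul_dotProduct, dotProduct_smul, smul_eq_mul, if_pos, if_neg hij]
    at hii hjj hij'
  nlinarith

lemma mul_dotProduct_self_le (hA : A.IsHermitian) {x : m → ℝ} {i₀ : m}
    (hx : x ⬝ᵥ ⇑(hA.eigenvectorBasis i₀) = 0) {B : ℝ}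
    (hB : ∀ i ≠ i₀, B ≤ hA.eigenvalues i) : B * (x ⬝ᵥ x) ≤ x ⬝ᵥ (A *ᵥ x) := by
  set b := hA.eigenvectorBasis
  have hinner (y z : m → ℝ) : inner ℝ (WithLp.toLp 2 y) (WithLp.toLp 2 z) = y ⬝ᵥ z := by
    rw [EuclideanSpace.inner_toLp_toLp, star_trivial, dotProduct_comm]
  have hAb (i : m) :
      inner ℝ (b i) (WithLp.toLp 2 (A *ᵥ x)) = hA.eigenvalues i * (x ⬝ᵥ b i) := by
    rw [EuclideanSpace.inner_eq_star_dotProduct, star_trivial, WithLp.ofLp_toLp, dotProduct_comm,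
      dotProduct_mulVec, ← mulVec_transpose, ← conjTranspose_eq_transpose_of_trivial, hA.eq,
      hA.mulVec_eigenvectorBasis, smul_dotProduct, smul_eq_mul, dotProduct_comm]
  have hxb (i : m) : inner ℝ (WithLp.toLp 2 x) (b i) = x ⬝ᵥ b i := by
    rw [real_inner_comm, EuclideanSpace.inner_eq_star_dotProduct, star_trivial]
  have hxx : x ⬝ᵥ x = ∑ i, (x ⬝ᵥ b i) ^ 2 := by
    rw [← hinner, ← b.sum_inner_mul_inner]
    simp only [hxb, real_inner_comm _ (b _), sq]
  have hxAx : x ⬝ᵥ (A *ᵥ x) = ∑ i, hA.eigenvalues i * (x ⬝ᵥ b i) ^ 2 := by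
    rw [← hinner, ← b.sum_inner_mul_inner]
    simp only [hxb, hAb]
    exact sum_congr rfl fun i _ => by ring
  rw [hxx, hxAx, mul_sum]
  refine sum_le_sum fun i _ => ?_
  rcases eq_or_ne i i₀ with rfl | hi
  · simp [hx]
  · exact mul_le_mul_of_nonneg_right (hB i hi) (sq_nonneg _)

end Matrix.IsHermitian

namespace Matrix

open Finset

variable {m : Type*} [Fintype m] [DecidableEq m] {A : Matrix m m ℝ}

lemma IsHermitian.kthSmallest_two_le_max (hA : A.IsHermitian) {i j : m} (hij : i ≠ j) :
    kthSmallest A 2 ≤ max (hA.eigenvalues i) (hA.eigenvalues j) := by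
  have h2 : 2 ≤ Fintype.card m := by
    simpa [card_pair hij] using card_le_univ {i, j}
  by_contra! h
  have hsub : {i, j} ⊆ ({i | hA.eigenvalues i < kthSmallest A 2} : Finset m) := by
    intro k hk
    rcases mem_insert.mp hk with rfl | hk
    · simpa using (le_max_left _ _).trans_lt h
    · simpa [mem_singleton.mp hk] using (le_max_right _ _).trans_lt h
  have := (card_le_card hsub).trans (hA.card_eigenvalues_lt_kthSmallest_le one_le_two h2)
  rw [card_pair hij] at this
  omega

lemma IsHermitian.exists_ne_eigenvalues_le_kthSmallest_two (hA : A.IsHermitian)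
    (h2 : 2 ≤ Fintype.card m) : ∃ i j, i ≠ j ∧ hA.eigenvalues i ≤ kthSmallest A 2 ∧
      hA.eigenvalues j ≤ kthSmallest A 2 := by
  obtain ⟨i, hi, j, hj, hij⟩ :=
    one_lt_card.mp (hA.le_card_eigenvalues_le_kthSmallest one_le_two h2)
  simp only [mem_filter, mem_univ, true_and] at hi hj
  exact ⟨i, j, hij, hi, hj⟩

lemma PosSemidef.kthSmallest_two_pos (hA : A.PosSemidef) (h2 : 2 ≤ Fintype.card m) {u : m → ℝ}
    (hker : ∀ w, A *ᵥ w = 0 → ∃ c : ℝ, w = c • u) : 0 < kthSmallest A 2 := by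
  obtain ⟨i, j, hij, hi, hj⟩ := hA.isHermitian.exists_ne_eigenvalues_le_kthSmallest_two h2
  by_contra! h
  exact hij (hA.isHermitian.eq_of_eigenvalues_eq_zero hker
    (le_antisymm (hi.trans h) (hA.eigenvalues_nonneg i))
    (le_antisymm (hj.trans h) (hA.eigenvalues_nonneg j)))

lemma PosSemidef.kthSmallest_two_mul_dotProduct_self_le (hA : A.PosSemidef) {u : m → ℝ}
    (hu : u ≠ 0) (hAu : A *ᵥ u = 0) (hker : ∀ w, A *ᵥ w = 0 → ∃ c : ℝ, w = c • u)
    {x : m → ℝ} (hx : x ⬝ᵥ u = 0) :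
    kthSmallest A 2 * (x ⬝ᵥ x) ≤ x ⬝ᵥ (A *ᵥ x) := by
  have hA' := hA.isHermitian
  obtain ⟨i₀, hi₀⟩ := hA'.exists_eigenvalues_eq_zero hu hAu
  obtain ⟨c, hc⟩ := hker _ (by rw [hA'.mulVec_eigenvectorBasis, hi₀, zero_smul])
  refine hA'.mul_dotProduct_self_le (i₀ := i₀) (by rw [hc, dotProduct_smul, hx, smul_zero])
    fun i hi => ?_
  have := hA'.kthSmallest_two_le_max hi
  rwa [hi₀, max_eq_left (hA.eigenvalues_nonneg i)] at this

end Matrix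

open Real in
lemma mul_cos_half_eq_of_recurrence {u : ℕ → ℝ} {θ : ℝ} {N : ℕ}
    (h₁ : u 1 = (2 * cos θ - 1) * u 0)
    (h : ∀ k, k + 2 ≤ N → u (k + 2) = 2 * cos θ * u (k + 1) - u k) :
    ∀ k ≤ N, u k * cos (θ / 2) = u 0 * cos ((2 * k + 1) * θ / 2) := by
  have cos_add_add_cos_sub (a b : ℝ) : cos (a + b) + cos (a - b) = 2 * cos b * cos a := by
    rw [cos_add, cos_sub]; ring
  intro k
  induction k using Nat.twoStepInduction with
  | zero => intro; ring_nf
  | one =>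
    intro
    have := cos_add_add_cos_sub θ (θ / 2)
    rw [show θ + θ / 2 = (2 * ((1 : ℕ) : ℝ) + 1) * θ / 2 by push_cast; ring,
      show θ - θ / 2 = θ / 2 by ring] at this
    rw [h₁]
    linear_combination -u 0 * this
  | more k ih₀ ih₁ =>
    intro hk
    have := cos_add_add_cos_sub ((2 * (k + 1 : ℕ) + 1) * θ / 2) θ
    rw [show (2 * ((k + 1 : ℕ) : ℝ) + 1) * θ / 2 + θ =
          (2 * ((k + 2 : ℕ) : ℝ) + 1) * θ / 2 by push_cast; ring,
      show (2 * ((k + 1 : ℕ) : ℝ) + 1) * θ / 2 - θ = (2 * (k : ℝ) + 1) * θ / 2 by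
        push_cast; ring] at this
    rw [h k hk]
    linear_combination 2 * cos θ * ih₁ (by omega) - ih₀ (by omega) - u 0 * this

namespace Qp

open Finset

variable {n : ℕ}

lemma isSymm : (Qp n).IsSymm := by
  ext i j
  simp only [transpose_apply, Qp]
  -- each branch condition of `Qp` is invariant under swapping the two indices
  repeat apply if_congr (by omega) rfl
  rfl

lemma nonneg (hn : 4 ≤ n) (i j : Fin n) : 0 ≤ Qp n i j := by
  have : (4 : ℝ) ≤ n := by exact_mod_cast hn
  simp only [Qp]
  split_ifs <;> linarith

lemma apply_succ_pos (hn : 3 ≤ n) (i : ℕ) (hi : i + 1 < n) :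
    0 < Qp n ⟨i, by omega⟩ ⟨i + 1, hi⟩ := by
  have : (3 : ℝ) ≤ n := by exact_mod_cast hn
  dsimp only [Qp]
  split_ifs <;> first | omega | linarith

lemma apply_eq_zero {i j : ℕ} (hi : i < n) (hj : j < n) (hij : i ≠ j) (hsucc : i + 1 ≠ j)
    (hpred : j + 1 ≠ i) (hsum : i + j ≠ 2) : Qp n ⟨i, hi⟩ ⟨j, hj⟩ = 0 := by
  dsimp only [Qp]
  rw [if_neg (by omega), if_neg (by omega), if_neg (by omega), if_neg (by omega),
    if_neg (by omega), if_neg (by omega), if_neg (by omega), if_neg (by omega)]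

lemma apply_of_eq_succ {i j : ℕ} (hi : i < n) (hj : j < n) (h₂ : 2 ≤ i) (h : j = i + 1) :
    Qp n ⟨i, hi⟩ ⟨j, hj⟩ = 1 := by
  dsimp only [Qp]
  rw [if_neg (by omega), if_neg (by omega), if_neg (by omega), if_neg (by omega),
    if_neg (by omega), if_pos (by omega)]

lemma apply_of_succ_eq {i j : ℕ} (hi : i < n) (hj : j < n) (h₂ : 2 ≤ j) (h : i = j + 1) :
    Qp n ⟨i, hi⟩ ⟨j, hj⟩ = 1 := by
  dsimp only [Qp]
  rw [if_neg (by omega), if_neg (by omega), if_neg (by omega), if_neg (by omega),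
    if_neg (by omega), if_pos (by omega)]

lemma Lap_mulVec_apply_zero (hn : 3 ≤ n) (w : Fin n → ℝ) :
    (Lap (Qp n) *ᵥ w) ⟨0, by omega⟩ = (n - 2) * (w ⟨0, by omega⟩ - w ⟨1, by omega⟩) +
      2 * (w ⟨0, by omega⟩ - w ⟨2, by omega⟩) := by
  rw [Lap_mulVec_apply_eq_sum _ _ _ {⟨1, by omega⟩, ⟨2, by omega⟩}, sum_pair (by simp)]
  · dsimp only [Qp]
    norm_num
  · rintro ⟨j, hj⟩ hjS hji
    simp only [mem_insert, mem_singleton, Fin.mk.injEq, ne_eq, not_or] at hjS hji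
    exact apply_eq_zero _ _ (by omega) (by omega) (by omega) (by omega)

lemma Lap_mulVec_apply_one (hn : 3 ≤ n) (w : Fin n → ℝ) :
    (Lap (Qp n) *ᵥ w) ⟨1, by omega⟩ = (n - 2) * (w ⟨1, by omega⟩ - w ⟨0, by omega⟩) +
      (w ⟨1, by omega⟩ - w ⟨2, by omega⟩) := by
  rw [Lap_mulVec_apply_eq_sum _ _ _ {⟨0, by omega⟩, ⟨2, by omega⟩}, sum_pair (by simp)]
  · dsimp only [Qp]
    norm_num
  · rintro ⟨j, hj⟩ hjS hji
    simp only [mem_insert, mem_singleton, Fin.mk.injEq, ne_eq, not_or] at hjS hji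
    exact apply_eq_zero _ _ (by omega) (by omega) (by omega) (by omega)

lemma Lap_mulVec_apply_of_three_le (w : Fin n → ℝ) (i : ℕ) (hi : 3 ≤ i) (hin : i + 1 < n) :
    (Lap (Qp n) *ᵥ w) ⟨i, by omega⟩ =
      (w ⟨i, by omega⟩ - w ⟨i - 1, by omega⟩) + (w ⟨i, by omega⟩ - w ⟨i + 1, hin⟩) := by
  rw [Lap_mulVec_apply_eq_sum _ _ _ {⟨i - 1, by omega⟩, ⟨i + 1, hin⟩},
    sum_pair (by simp only [ne_eq, Fin.mk.injEq]; omega)]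
  · rw [apply_of_succ_eq _ _ (by omega) (by omega), apply_of_eq_succ _ _ (by omega) rfl]
    ring
  · rintro ⟨j, hj⟩ hjS hji
    simp only [mem_insert, mem_singleton, Fin.mk.injEq, ne_eq, not_or] at hjS hji
    exact apply_eq_zero _ _ (by omega) (by omega) (by omega) (by omega)

lemma Lap_mulVec_apply_last (hn : 4 ≤ n) (w : Fin n → ℝ) :
    (Lap (Qp n) *ᵥ w) ⟨n - 1, by omega⟩ = w ⟨n - 1, by omega⟩ - w ⟨n - 2, by omega⟩ := by
  rw [Lap_mulVec_apply_eq_sum _ _ _ {⟨n - 2, by omega⟩}, sum_singleton]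
  · rw [apply_of_succ_eq _ _ (by omega) (by omega)]
    ring
  · rintro ⟨j, hj⟩ hjS hji
    simp only [mem_singleton, Fin.mk.injEq, ne_eq] at hjS hji
    exact apply_eq_zero _ _ (by omega) (by omega) (by omega) (by omega)

def testVector (n : ℕ) : Fin n → ℝ := fun j =>
  if j.val < 2 then -1 else if n - 2 ≤ j.val then 1 else 0

lemma testVector_apply_of_lt {j : ℕ} (hj : j < n) (h : j < 2) : testVector n ⟨j, hj⟩ = -1 :=
  if_pos (show j < 2 from h)

lemma testVector_apply_of_le {j : ℕ} (hj : j < n) (h₂ : 2 ≤ j) (h : n - 2 ≤ j) :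
    testVector n ⟨j, hj⟩ = 1 := by
  rw [testVector, if_neg (show ¬j < 2 by omega), if_pos (show n - 2 ≤ j from h)]

lemma testVector_apply_of_lt_of_le {j : ℕ} (hj : j < n) (h₂ : 2 ≤ j) (h : j < n - 2) :
    testVector n ⟨j, hj⟩ = 0 := by
  rw [testVector, if_neg (show ¬j < 2 by omega), if_neg (show ¬n - 2 ≤ j by omega)]

lemma testVector_dotProduct (hn : 5 ≤ n) (f : Fin n → ℝ) :
    testVector n ⬝ᵥ f =
      f ⟨n - 2, by omega⟩ + f ⟨n - 1, by omega⟩ - f ⟨0, by omega⟩ - f ⟨1, by omega⟩ := by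
  rw [dotProduct, ← sum_subset (subset_univ
    {⟨0, by omega⟩, ⟨1, by omega⟩, ⟨n - 2, by omega⟩, ⟨n - 1, by omega⟩})]
  · rw [sum_insert (by simp only [mem_insert, mem_singleton, Fin.mk.injEq]; omega),
      sum_insert (by simp only [mem_insert, mem_singleton, Fin.mk.injEq]; omega),
      sum_pair (by simp only [ne_eq, Fin.mk.injEq]; omega)]
    simp (disch := omega) only [testVector_apply_of_lt, testVector_apply_of_le]
    ring
  · rintro ⟨j, hj⟩ - hjS
    simp only [mem_insert, mem_singleton, Fin.mk.injEq, not_or] at hjS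
    rw [testVector_apply_of_lt_of_le hj (by omega) (by omega), zero_mul]

lemma eq_smul_one_of_Lap_mulVec_eq_zero (hn : 4 ≤ n) {w : Fin n → ℝ}
    (hw : Lap (Qp n) *ᵥ w = 0) : ∃ c : ℝ, w = c • 1 := by
  have hstep (k : ℕ) (hk : k + 1 < n) : w ⟨k + 1, hk⟩ = w ⟨k, by omega⟩ :=
    (eq_of_Lap_mulVec_eq_zero isSymm (nonneg hn) hw (apply_succ_pos (by omega) k hk).ne').symm
  have hconst (k : ℕ) (hk : k < n) : w ⟨k, hk⟩ = w ⟨0, by omega⟩ := by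
    induction k with
    | zero => rfl
    | succ k ih => rw [hstep k hk, ih]
  exact ⟨w ⟨0, by omega⟩, funext fun i => by simpa using hconst i i.isLt⟩

lemma kthSmallest_Lap_two_pos (hn : 4 ≤ n) : 0 < kthSmallest (Lap (Qp n)) 2 :=
  (posSemidef_Lap isSymm (nonneg hn)).kthSmallest_two_pos (by simp; omega)
    fun _ => eq_smul_one_of_Lap_mulVec_eq_zero hn

lemma kthSmallest_Lap_two_le_one (hn : 5 ≤ n) : kthSmallest (Lap (Qp n)) 2 ≤ 1 := by
  have h := (posSemidef_Lap isSymm (nonneg (by omega))).kthSmallest_two_mul_dotProduct_self_le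
    (Function.ne_iff.mpr ⟨⟨0, by omega⟩, one_ne_zero⟩)
    (Lap_mulVec_one _) (fun _ => eq_smul_one_of_Lap_mulVec_eq_zero (by omega))
    (x := testVector n) (by rw [testVector_dotProduct hn]; simp)
  have hxx : testVector n ⬝ᵥ testVector n = 4 := by
    rw [testVector_dotProduct hn]
    simp (disch := omega) only [testVector_apply_of_lt, testVector_apply_of_le]
    norm_num
  have hxLx : testVector n ⬝ᵥ (Lap (Qp n) *ᵥ testVector n) = 4 := by
    rw [testVector_dotProduct hn, Lap_mulVec_apply_of_three_le _ (n - 2) (by omega) (by omega),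
      Lap_mulVec_apply_last (by omega), Lap_mulVec_apply_zero (by omega),
      Lap_mulVec_apply_one (by omega)]
    simp (disch := omega) only [testVector_apply_of_lt, testVector_apply_of_le,
      testVector_apply_of_lt_of_le]
    norm_num
  rw [hxx, hxLx] at h
  linarith

lemma mul_cos_half_eq_of_Lap_mulVec_eq_smul (hn : 4 ≤ n) {v : Fin n → ℝ} {μ θ : ℝ}
    (hv : Lap (Qp n) *ᵥ v = μ • v) (hθ : 2 * Real.cos θ = 2 - μ) :
    v ⟨2, by omega⟩ * Real.cos (θ / 2) =
      v ⟨n - 1, by omega⟩ * Real.cos ((2 * n - 5) * θ / 2) := by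
  have hrow (i : Fin n) : (Lap (Qp n) *ᵥ v) i = μ * v i := by rw [hv]; rfl
  have hv_congr {a b : ℕ} (ha : a < n) (hb : b < n) (h : a = b) :
      v ⟨a, ha⟩ = v ⟨b, hb⟩ := by
    subst h; rfl
  have hstart :
      v ⟨n - 1 - 1, by omega⟩ = (2 * Real.cos θ - 1) * v ⟨n - 1 - 0, by omega⟩ := by
    have hlast := hrow ⟨n - 1, by omega⟩
    rw [Lap_mulVec_apply_last hn] at hlast
    rw [hv_congr _ (by omega) (show n - 1 - 1 = n - 2 by omega),
      hv_congr _ (by omega) (show n - 1 - 0 = n - 1 by omega)]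
    linear_combination -hlast - v ⟨n - 1, by omega⟩ * hθ
  have hstep (k : ℕ) (hk : k + 2 ≤ n - 3) : v ⟨n - 1 - (k + 2), by omega⟩ =
      2 * Real.cos θ * v ⟨n - 1 - (k + 1), by omega⟩ - v ⟨n - 1 - k, by omega⟩ := by
    have hmid := hrow ⟨n - 2 - k, by omega⟩
    rw [Lap_mulVec_apply_of_three_le _ _ (by omega) (by omega)] at hmid
    rw [hv_congr _ (by omega) (show n - 1 - (k + 2) = n - 2 - k - 1 by omega),
      hv_congr _ (by omega) (show n - 1 - (k + 1) = n - 2 - k by omega),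
      hv_congr _ (by omega) (show n - 1 - k = n - 2 - k + 1 by omega)]
    linear_combination -hmid - v ⟨n - 2 - k, by omega⟩ * hθ
  have h := mul_cos_half_eq_of_recurrence (u := fun k => v ⟨n - 1 - k, by omega⟩) hstart hstep
    (n - 3) le_rfl
  rwa [hv_congr _ (by omega) (show n - 1 - (n - 3) = 2 by omega),
    hv_congr _ (by omega) (show n - 1 - 0 = n - 1 by omega),
    show (2 * ((n - 3 : ℕ) : ℝ) + 1) = 2 * n - 5 by
      push_cast [Nat.cast_sub (by omega : 3 ≤ n)]; ring] at h

lemma mul_sub_eq_mul_of_Lap_mulVec_eq_smul (hn : 3 ≤ n) {v : Fin n → ℝ} {μ : ℝ}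
    (hv : Lap (Qp n) *ᵥ v = μ • v) :
    (μ ^ 2 - (2 * n - 1) * μ + 3 * n - 4) * (v ⟨1, by omega⟩ - v ⟨0, by omega⟩) =
      μ * v ⟨2, by omega⟩ := by
  have hrow (i : Fin n) : (Lap (Qp n) *ᵥ v) i = μ * v i := by rw [hv]; rfl
  have h₀ := hrow ⟨0, by omega⟩
  have h₁ := hrow ⟨1, by omega⟩
  rw [Lap_mulVec_apply_zero hn] at h₀
  rw [Lap_mulVec_apply_one hn] at h₁
  linear_combination (μ - 1) * h₀ + (2 - μ) * h₁

end Qp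

open Real in
lemma exists_two_mul_cos_eq_two_sub {μ : ℝ} (hμ₀ : 0 < μ) (hμ₁ : μ ≤ 1) :
    ∃ θ, 0 < θ ∧ θ ≤ π / 3 ∧ 2 * cos θ = 2 - μ := by
  refine ⟨arccos (1 - μ / 2), arccos_pos.mpr (by linarith), ?_, ?_⟩
  · calc arccos (1 - μ / 2) ≤ arccos (cos (π / 3)) := by
          rw [cos_pi_div_three]; exact arccos_le_arccos (by linarith)
      _ = π / 3 := arccos_cos (by positivity) (by linarith [pi_pos])
  · rw [cos_arccos (by linarith) (by linarith)]
    ring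

theorem stmt8 (n : ℕ) (hn : 9 ≤ n) (mu : ℝ) (hmu : mu = kthSmallest (Lap (Qp n)) 2)
    (v : Fin n → ℝ) (hev : Lap (Qp n) *ᵥ v = mu • v) :
    ∃ θ : ℝ, 0 < θ ∧ θ ≤ Real.pi / 3 ∧ 2 * Real.cos θ = 2 - mu ∧
      |v ⟨1, by omega⟩ - v ⟨0, by omega⟩| ≤
        (2 * mu * |Real.cos ((2 * (n : ℝ) - 5) * θ / 2)|) / ((n : ℝ) * Real.cos (θ / 2)) *
          |v ⟨n - 1, by omega⟩| := by
  have hμ₀ : 0 < mu := hmu ▸ Qp.kthSmallest_Lap_two_pos (by omega)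
  have hμ₁ : mu ≤ 1 := hmu ▸ Qp.kthSmallest_Lap_two_le_one (by omega)
  obtain ⟨θ, hθ₀, hθ, hcos⟩ := exists_two_mul_cos_eq_two_sub hμ₀ hμ₁
  refine ⟨θ, hθ₀, hθ, hcos, ?_⟩
  have htail := Qp.mul_cos_half_eq_of_Lap_mulVec_eq_smul (by omega) hev hcos
  have hhead := Qp.mul_sub_eq_mul_of_Lap_mulVec_eq_smul (by omega) hev
  have hc : 0 < Real.cos (θ / 2) :=
    Real.cos_pos_of_mem_Ioo ⟨by linarith [Real.pi_pos], by linarith [Real.pi_pos]⟩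
  have h9 : (9 : ℝ) ≤ n := by exact_mod_cast hn
  set D := mu ^ 2 - (2 * n - 1) * mu + 3 * n - 4
  have hD : (n : ℝ) ≤ 2 * D := by nlinarith [mul_nonneg (sub_nonneg.2 hμ₁) hμ₀.le]
  rw [div_mul_eq_mul_div, le_div_iff₀ (by positivity)]
  calc |v ⟨1, _⟩ - v ⟨0, _⟩| * (n * Real.cos (θ / 2))
      = n * (|v ⟨1, _⟩ - v ⟨0, _⟩| * Real.cos (θ / 2)) := by ring
    _ ≤ 2 * D * (|v ⟨1, _⟩ - v ⟨0, _⟩| * Real.cos (θ / 2)) := by gcongr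
    _ = 2 * (|D * (v ⟨1, _⟩ - v ⟨0, _⟩)| * Real.cos (θ / 2)) := by
        rw [abs_mul, abs_of_pos (by linarith : 0 < D)]
        ring
    _ = 2 * mu * |v ⟨2, by omega⟩ * Real.cos (θ / 2)| := by
        rw [hhead, abs_mul, abs_mul, abs_of_pos hμ₀, abs_of_pos hc]
        ring
    _ = 2 * mu * |Real.cos ((2 * n - 5) * θ / 2)| * |v ⟨n - 1, _⟩| := by
        rw [htail, abs_mul]
        ring
end

section
/- Let n ≥ 4 be an integer. Then for every vector y = (y₁,…,y_n)ᵀ ∈ ℝⁿ, the quadratic form of the Laplacian satisfies yᵀ 𝔏(Q_n) y = (n−2)·Σ_{i=1}^{n−1} (y_{i+1} − y_i)² + 2·Σ_{i=1}^{n−2} (y_{i+2} − y_i)². -/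
open Matrix

/-! Only the off-diagonal entries of `M` enter the quadratic form of `𝔏(M)`, namely as
`∑ᵢ ∑ⱼ M i j (yᵢ² - yᵢ yⱼ)`, and off the diagonal `Q_n` is `(n - 2)·[|i - j| = 1] + 2·[|i - j| = 2]`.
The band `[|i - j| = k]` contributes each pair `(i, i + k)` twice, once as `yᵢ² - yᵢ yᵢ₊ₖ` and once
as `yᵢ₊ₖ² - yᵢ₊ₖ yᵢ`, which add up to `(yᵢ₊ₖ - yᵢ)²`. -/

open Finset

theorem dotProduct_Lap_mulVec {n : ℕ} (M : Matrix (Fin n) (Fin n) ℝ) (y : Fin n → ℝ) :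
    y ⬝ᵥ (Lap M *ᵥ y) = ∑ i, ∑ j, M i j * (y i ^ 2 - y i * y j) := by
  rw [Lap, sub_mulVec, dotProduct_sub]
  simp only [dotProduct, mulVec_diagonal]
  simp only [mulVec, dotProduct, mul_sum, sum_mul, ← sum_sub_distrib]
  exact sum_congr rfl fun i _ => sum_congr rfl fun j _ => by ring

theorem sum_range_sum_range_ite_eq_add (n k : ℕ) (f : ℕ → ℕ → ℝ) :
    ∑ i ∈ range n, ∑ j ∈ range n, (if j = i + k then f i j else 0) =
      ∑ i ∈ range (n - k), f i (i + k) := by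
  have hfilter : (range n).filter (fun i => i + k ∈ range n) = range (n - k) := by
    ext i; simp only [mem_filter, mem_range]; omega
  simp only [sum_ite_eq', ← sum_filter, hfilter]

def distIndicator (k i j : ℕ) : ℝ := if ((i : ℤ) - j).natAbs = k then 1 else 0

theorem distIndicator_eq {k : ℕ} (hk : 0 < k) (i j : ℕ) :
    distIndicator k i j = (if j = i + k then 1 else 0) + (if i = j + k then 1 else 0) := by
  unfold distIndicator
  split_ifs <;> first | (exfalso; omega) | norm_num

theorem sum_range_distIndicator_mul {k : ℕ} (hk : 0 < k) (n : ℕ) (z : ℕ → ℝ) :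
    ∑ i ∈ range n, ∑ j ∈ range n, distIndicator k i j * (z i ^ 2 - z i * z j) =
      ∑ i ∈ range (n - k), (z (i + k) - z i) ^ 2 := by
  simp only [distIndicator_eq hk, add_mul, ite_mul, one_mul, zero_mul, sum_add_distrib]
  rw [sum_comm (f := fun i j => if i = j + k then _ else _),
    sum_range_sum_range_ite_eq_add, sum_range_sum_range_ite_eq_add, ← sum_add_distrib]
  exact sum_congr rfl fun i _ => by ring

theorem Qmat_apply_of_ne {n : ℕ} {i j : Fin n} (hij : i ≠ j) :
    Qmat n i j = ((n : ℝ) - 2) * distIndicator 1 i j + 2 * distIndicator 2 i j := by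
  have hd : ((i : ℤ) - j).natAbs ≠ 0 := by omega
  simp only [Qmat, distIndicator, if_neg hd]
  split_ifs <;> first | (exfalso; omega) | ring

theorem stmt14 (n : ℕ) (y : Fin n → ℝ) :
    y ⬝ᵥ (Lap (Qmat n) *ᵥ y) =
      ((n : ℝ) - 2) *
          ∑ i : Fin (n - 1),
            (y ⟨i.val + 1, by have := i.isLt; omega⟩ - y ⟨i.val, by have := i.isLt; omega⟩) ^ 2 +
        2 * ∑ i : Fin (n - 2),
            (y ⟨i.val + 2, by have := i.isLt; omega⟩ - y ⟨i.val, by have := i.isLt; omega⟩) ^ 2 := by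
  set z : ℕ → ℝ := Function.extend Fin.val y 0
  have hz (i : Fin n) : y i = z i := (Fin.val_injective.extend_apply y 0 i).symm
  have hQ (i j : Fin n) : Qmat n i j * (y i ^ 2 - y i * y j) =
      (((n : ℝ) - 2) * distIndicator 1 i j + 2 * distIndicator 2 i j) * (z i ^ 2 - z i * z j) := by
    rcases eq_or_ne i j with rfl | hij
    · ring
    · rw [Qmat_apply_of_ne hij, hz i, hz j]
  calc y ⬝ᵥ (Lap (Qmat n) *ᵥ y)
      = ∑ i ∈ range n, ∑ j ∈ range n,
          (((n : ℝ) - 2) * distIndicator 1 i j + 2 * distIndicator 2 i j) *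
            (z i ^ 2 - z i * z j) := by
        simp only [dotProduct_Lap_mulVec, hQ, sum_range]
    _ = ((n : ℝ) - 2) * ∑ i ∈ range (n - 1), (z (i + 1) - z i) ^ 2 +
          2 * ∑ i ∈ range (n - 2), (z (i + 2) - z i) ^ 2 := by
        simp only [add_mul, mul_assoc, sum_add_distrib, ← mul_sum,
          sum_range_distIndicator_mul one_pos, sum_range_distIndicator_mul two_pos]
    _ = _ := by
        simp only [hz, sum_range]
end
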